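/- arXiv:0802.3675 — 5 statements merged into one kernel-verified Lean document; each statement's English description precedes it below -/
import Mathlib

section
/- The set R_d is closed under multiplication and contains 1, i.e. R_d is a subring of the polynomial ring ℚ[t_1,…,t_d]. -/
open MvPolynomial

noncomputable section

instance strIncDec (p n : ℕ) : DecidablePred (fun α : Fin p → Fin n => StrictMono α) :=
  fun α => decidable_of_iff (∀ a b : Fin p, a < b → α a < α b) Iff.rfl

/-- Strictly increasing maps `Fin p → Fin n`. -/
abbrev StrInc (p n : ℕ) : Type := {α : Fin p → Fin n // StrictMono α}

/-- The ideal `I_n = (t_1 ⋯ t_n)·ℚ[t_1,…,t_n]`. -/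
def Iset (n : ℕ) : Set (MvPolynomial (Fin n) ℚ) :=
  {p | ∃ q, p = (∏ i, X i) * q}

/-- The subset `R_d ⊆ ℚ[t_1,…,t_d]`. -/
def Rset (d : ℕ) : Set (MvPolynomial (Fin d) ℚ) :=
  {F | ∃ f : (n : Fin (d+1)) → MvPolynomial (Fin n.1) ℚ,
    (∀ n, f n ∈ Iset n.1) ∧
    F = ∑ n : Fin (d+1), ∑ α : StrInc n.1 d, rename α.1 (f n)}

/-- Setting `t_{d+1} = 0` : the map `ℚ[t_1,…,t_{d+1}] → ℚ[t_1,…,t_d]`. -/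
def projT (d : ℕ) : MvPolynomial (Fin (d+1)) ℚ →ₐ[ℚ] MvPolynomial (Fin d) ℚ :=
  aeval (fun i : Fin (d+1) => if h : (i : ℕ) < d then X ⟨i, h⟩ else 0)

abbrev Rbig := (n : ℕ) → MvPolynomial (Fin n) ℚ

/-- A pair of strictly increasing maps whose images jointly cover `Fin n`. -/
abbrev Covers {p q n : ℕ} (α : StrInc p n) (β : StrInc q n) : Prop :=
  ∀ i : Fin n, (∃ j, α.1 j = i) ∨ (∃ j, β.1 j = i)

/-- The product of the ring `R = ⊕_n I_n`. -/
def mulR (f g : Rbig) : Rbig := fun n =>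
  ∑ p : Fin (n+1), ∑ q : Fin (n+1), ∑ α : StrInc p.1 n, ∑ β : StrInc q.1 n,
    if Covers α β then rename α.1 (f p.1) * rename β.1 (g q.1) else 0

/-- The element of `⊕_n ℚ[t_1,…,t_n]` concentrated in component `m`. -/
def sing (m : ℕ) (p : MvPolynomial (Fin m) ℚ) : Rbig :=
  fun n => if h : n = m then cast (by rw [h]) p else 0

/-- The carrier of `R = ⊕_{n ≥ 0} I_n`. -/
def RsetAll : Set Rbig :=
  {f | (∀ n, f n ∈ Iset n) ∧ {n | f n ≠ 0}.Finite}

/-- The graded ring homomorphism `R → R_d`. -/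
def theta (d : ℕ) (f : Rbig) : MvPolynomial (Fin d) ℚ :=
  ∑ n : Fin (d+1), ∑ α : StrInc n.1 d, rename α.1 (f n.1)

/-- Elements of the degreewise inverse limit `lim'_d R_d` of graded rings. -/
def CompatFam : Set ((d : ℕ) → MvPolynomial (Fin d) ℚ) :=
  {F | (∀ d, F d ∈ Rset d) ∧ (∀ d, projT d (F (d+1)) = F d) ∧
    ∃ N, ∀ d, (F d).totalDegree ≤ N}

end

/-!
Write `placeOn f S` for `f_{|S|}` with its variables renamed onto `S ⊆ [1,d]` in increasing order.
A strictly increasing map is the increasing enumeration of its image, so `R_d` consists of the sums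
`∑_S placeOn f S` with `f_n ∈ I_n`. A product `placeOn f A * placeOn g B` equals
`placeOn c (A ∪ B)`, where `c` is the same product formed inside `[1, |A ∪ B|]`, with `A, B`
replaced by their preimages, which cover it. Since
`∏_A t_i · ∏_B t_i = ∏_{A ∪ B} t_i · ∏_{A ∩ B} t_i`, such a `c` again lies in `I_{|A ∪ B|}`.
-/

open MvPolynomial Finset

noncomputable section

variable {d : ℕ}

theorem mem_Iset_iff {n : ℕ} {p : MvPolynomial (Fin n) ℚ} : p ∈ Iset n ↔ (∏ i, X i) ∣ p :=
  Iff.rfl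

theorem card_eq_of_range_eq {p q : ℕ} {α : Fin p → Fin d} {β : Fin q → Fin d}
    (hα : α.Injective) (hβ : β.Injective) (h : Set.range α = Set.range β) : p = q := by
  simpa [Set.ncard_range_of_injective hα, Set.ncard_range_of_injective hβ] using
    congrArg Set.ncard h

theorem rename_eq_of_range_eq (f : Rbig) {p q : ℕ} {α : Fin p → Fin d} {β : Fin q → Fin d}
    (hα : StrictMono α) (hβ : StrictMono β) (h : Set.range α = Set.range β) :
    rename α (f p) = rename β (f q) := by
  obtain rfl := card_eq_of_range_eq hα.injective hβ.injective h
  obtain rfl := (hα.range_inj hβ).1 h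
  rfl

def placeOn (f : Rbig) (S : Finset (Fin d)) : MvPolynomial (Fin d) ℚ :=
  rename (S.orderEmbOfFin rfl) (f S.card)

theorem theta_eq_sum_placeOn (f : Rbig) : theta d f = ∑ S : Finset (Fin d), placeOn f S := by
  rw [theta, Fin.sum_univ_eq_sum_range (fun n => ∑ α : StrInc n d, rename α.1 (f n)),
    Finset.sum_sigma']
  refine Finset.sum_nbij (fun x => univ.image x.2.1) (fun _ _ => mem_univ _) ?_ ?_ ?_
  · rintro ⟨p, α, hα⟩ - ⟨q, β, hβ⟩ - h
    have hr : Set.range α = Set.range β := by simpa using congrArg ((↑) : _ → Set (Fin d)) h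
    obtain rfl := card_eq_of_range_eq hα.injective hβ.injective hr
    obtain rfl := (hα.range_inj hβ).1 hr
    rfl
  · intro S _
    exact ⟨⟨S.card, _, (S.orderEmbOfFin rfl).strictMono⟩, by simpa using card_le_univ S,
      image_orderEmbOfFin_univ S rfl⟩
  · rintro ⟨p, α, hα⟩ -
    exact rename_eq_of_range_eq f hα (orderEmbOfFin _ rfl).strictMono (by simp)

theorem rename_placeOn (f : Rbig) (S : Finset (Fin d)) (A : Finset (Fin S.card)) :
    rename (S.orderEmbOfFin rfl) (placeOn f A) =
      placeOn f (A.map (S.orderEmbOfFin rfl).toEmbedding) := by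
  rw [placeOn, placeOn, rename_rename]
  refine rename_eq_of_range_eq f
    ((S.orderEmbOfFin rfl).strictMono.comp (A.orderEmbOfFin rfl).strictMono)
    (orderEmbOfFin _ rfl).strictMono ?_
  rw [range_orderEmbOfFin, Set.range_comp, range_orderEmbOfFin, coe_map]
  rfl

theorem sum_union_eq_map_univ {α β M : Type*} [Fintype α] [Fintype β] [DecidableEq α]
    [DecidableEq β] [AddCommMonoid M] (e : α ↪ β) (F : Finset β × Finset β → M) :
    ∑ x : Finset β × Finset β with x.1 ∪ x.2 = univ.map e, F x =
      ∑ y : Finset α × Finset α with y.1 ∪ y.2 = univ, F (y.1.map e, y.2.map e) := by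
  symm
  refine sum_nbij (fun y => (y.1.map e, y.2.map e)) ?_ ?_ ?_ (fun _ _ => rfl)
  · rintro ⟨A, B⟩ h
    simp only [mem_filter, mem_univ, true_and] at h ⊢
    rw [← map_union, h]
  · rintro ⟨A, B⟩ - ⟨A', B'⟩ - h
    simp only [Prod.mk.injEq, map_inj] at h
    rw [h.1, h.2]
  · rintro ⟨A, B⟩ h
    simp only [mem_coe, mem_filter, mem_univ, true_and] at h
    obtain ⟨A', -, rfl⟩ := subset_map_iff.1 (h ▸ subset_union_left : A ⊆ univ.map e)
    obtain ⟨B', -, rfl⟩ := subset_map_iff.1 (h ▸ subset_union_right : B ⊆ univ.map e)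
    refine ⟨(A', B'), ?_, rfl⟩
    simpa [← map_union] using h

def coverProd (f g : Rbig) : Rbig := fun n =>
  ∑ x : Finset (Fin n) × Finset (Fin n) with x.1 ∪ x.2 = univ, placeOn f x.1 * placeOn g x.2

theorem theta_mul (f g : Rbig) : theta d f * theta d g = theta d (coverProd f g) := by
  rw [theta_eq_sum_placeOn, theta_eq_sum_placeOn, theta_eq_sum_placeOn, sum_mul_sum,
    ← Fintype.sum_prod_type', ← sum_fiberwise univ (fun x => x.1 ∪ x.2)]
  refine sum_congr rfl fun S _ => ?_
  rw [placeOn, coverProd, map_sum]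
  simp only [map_mul, rename_placeOn]
  simpa only [map_orderEmbOfFin_univ] using sum_union_eq_map_univ
    (S.orderEmbOfFin rfl).toEmbedding (fun x => placeOn f x.1 * placeOn g x.2)

theorem prod_X_dvd_placeOn {f : Rbig} (hf : ∀ n, f n ∈ Iset n) (S : Finset (Fin d)) :
    (∏ i ∈ S, X i) ∣ placeOn f S := by
  obtain ⟨c, hc⟩ := mem_Iset_iff.1 (hf S.card)
  have hprod : ∏ i ∈ S, (X i : MvPolynomial (Fin d) ℚ) = ∏ i, X (S.orderEmbOfFin rfl i) := by
    conv_lhs => rw [← map_orderEmbOfFin_univ S rfl, prod_map]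
    rfl
  refine ⟨rename (S.orderEmbOfFin rfl) c, ?_⟩
  rw [placeOn, hc, map_mul, map_prod, hprod]
  simp only [rename_X]

theorem coverProd_mem_Iset {f g : Rbig} (hf : ∀ n, f n ∈ Iset n) (hg : ∀ n, g n ∈ Iset n)
    (n : ℕ) : coverProd f g n ∈ Iset n := by
  refine dvd_sum fun x hx => ?_
  have hcover : x.1 ∪ x.2 = univ := (mem_filter.1 hx).2
  calc (∏ i, X i) ∣ (∏ i ∈ x.1 ∪ x.2, X i) * ∏ i ∈ x.1 ∩ x.2, X i := by
        rw [hcover]; exact dvd_mul_right _ _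
    _ = (∏ i ∈ x.1, X i) * ∏ i ∈ x.2, X i := prod_union_inter
    _ ∣ placeOn f x.1 * placeOn g x.2 :=
        mul_dvd_mul (prod_X_dvd_placeOn hf _) (prod_X_dvd_placeOn hg _)

theorem mem_Rset_iff {F : MvPolynomial (Fin d) ℚ} :
    F ∈ Rset d ↔ ∃ f : Rbig, (∀ n, f n ∈ Iset n) ∧ theta d f = F := by
  constructor
  · rintro ⟨f, hf, rfl⟩
    refine ⟨fun n => if h : n < d + 1 then f ⟨n, h⟩ else 0, fun n => ?_, ?_⟩
    · dsimp only
      split_ifs with h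
      exacts [hf ⟨n, h⟩, dvd_zero _]
    · simp only [theta, Fin.is_lt, dif_pos]
  · rintro ⟨f, hf, rfl⟩
    exact ⟨fun n => f n, fun n => hf n, rfl⟩

theorem single_zero_one_mem_Iset (n : ℕ) : (Pi.single 0 1 : Rbig) n ∈ Iset n := by
  rcases eq_or_ne n 0 with rfl | hn
  · simp [mem_Iset_iff]
  · rw [Pi.single_eq_of_ne hn]
    exact dvd_zero _

theorem theta_single_zero_one : theta d (Pi.single 0 1) = 1 := by
  rw [theta_eq_sum_placeOn, sum_eq_single ∅]
  · exact map_one _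
  · intro S _ hS
    rw [placeOn, Pi.single_eq_of_ne (card_ne_zero.2 (nonempty_iff_ne_empty.2 hS)), map_zero]
  · simp

end

noncomputable section

theorem stmt_0 (d : ℕ) :
    (1 : MvPolynomial (Fin d) ℚ) ∈ Rset d ∧
    ∀ x ∈ Rset d, ∀ y ∈ Rset d, x * y ∈ Rset d := by
  refine ⟨mem_Rset_iff.2 ⟨Pi.single 0 1, single_zero_one_mem_Iset, theta_single_zero_one⟩, ?_⟩
  rintro _ hx _ hy
  obtain ⟨f, hf, rfl⟩ := mem_Rset_iff.1 hx
  obtain ⟨g, hg, rfl⟩ := mem_Rset_iff.1 hy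
  exact mem_Rset_iff.2 ⟨coverProd f g, coverProd_mem_Iset hf hg, (theta_mul f g).symm⟩

end
end

section
/- The kernel of the composite ring homomorphism R_d ↪ ℚ[t_1,…,t_d] → ℚ[t_1,…,t_d]/(t_d) = ℚ[t_1,…,t_{d-1}] equals the ideal I_d = (t_1⋯t_d)·ℚ[t_1,…,t_d], and its image equals R_{d-1}. In particular R_d/I_d ≅ R_{d-1}. -/
open MvPolynomial

noncomputable section

/-!
Every monomial of `α_* f` with `f ∈ I_n` and `α` injective has support exactly the image of `α`.
So distinct pairs `(n, α)` contribute disjoint sets of monomials to `Σ_n Σ_α α_* f_n`, and the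
components `f_n` with `n ≤ d` are recovered from the sum. Setting `t_{d+1} = 0` kills `α_* f_n`
when `d + 1` is in the image of `α` and otherwise merely reindexes it, so the image of
`Σ_n Σ_α α_* f_n ∈ R_{d+1}` is the same expression in `R_d` with the top component `f_{d+1}`
dropped. Hence the image is `R_d`, and the kernel consists of the sums whose components below
the top vanish, which is `I_{d+1}`.
-/

lemma StrInc.sigma_eq_of_range_eq {K d : ℕ} {a b : Σ n : Fin K, StrInc n.1 d}
    (h : Set.range a.2.1 = Set.range b.2.1) : a = b := by
  obtain ⟨n, α⟩ := a
  obtain ⟨m, β⟩ := b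
  obtain rfl : n = m := by
    have := congrArg (fun s : Set (Fin d) => Nat.card s) h
    simp only at this
    rwa [Nat.card_range_of_injective α.2.injective, Nat.card_range_of_injective β.2.injective,
      Nat.card_eq_fintype_card, Nat.card_eq_fintype_card, Fintype.card_fin, Fintype.card_fin,
      Fin.val_inj] at this
  obtain rfl : α = β := Subtype.ext ((α.2.range_inj β.2).1 h)
  rfl

instance StrInc.instUnique (k : ℕ) : Unique (StrInc k k) where
  default := ⟨id, strictMono_id⟩
  uniq α := Subtype.ext α.2.eq_id

lemma StrInc.isEmpty_of_lt {n d : ℕ} (h : d < n) : IsEmpty (StrInc n d) :=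
  ⟨fun α => absurd (by simpa using Fintype.card_le_of_injective α.1 α.2.injective) h.not_ge⟩

def StrInc.castSucc {n d : ℕ} (β : StrInc n d) : StrInc n (d + 1) :=
  ⟨Fin.castSucc ∘ β.1, Fin.strictMono_castSucc.comp β.2⟩

lemma StrInc.castSucc_injective {n d : ℕ} : Function.Injective (@StrInc.castSucc n d) :=
  fun _ _ h => Subtype.ext ((Fin.castSucc_injective _).comp_left (congrArg Subtype.val h))

lemma StrInc.exists_eq_last_of_notMem_range_castSucc {n d : ℕ} {α : StrInc n (d + 1)}
    (hα : α ∉ Set.range StrInc.castSucc) : ∃ j, α.1 j = Fin.last d := by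
  by_contra! h
  refine hα ⟨⟨fun j => (α.1 j).castPred (h j), fun a b hab => ?_⟩, ?_⟩
  · exact Fin.castPred_lt_castPred_iff.2 (α.2 hab)
  · exact Subtype.ext (funext fun j => Fin.castSucc_castPred _ (h j))

section SumRename

variable {R : Type*} [CommSemiring R]

lemma support_eq_univ_of_prod_X_dvd {σ : Type*} [Fintype σ] {p : MvPolynomial σ R}
    (hp : (∏ i, X i) ∣ p) {u : σ →₀ ℕ} (hu : coeff u p ≠ 0) : u.support = Finset.univ := by
  classical
  refine Finset.eq_univ_of_forall fun i => ?_
  obtain ⟨q, rfl⟩ := (Finset.dvd_prod_of_mem X (Finset.mem_univ i)).trans hp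
  rw [coeff_X_mul'] at hu
  by_contra hi
  exact hu (if_neg hi)

lemma coe_support_eq_range_of_coeff_rename_ne_zero {σ τ : Type*} [Fintype σ]
    {f : σ → τ} (hf : Function.Injective f) {p : MvPolynomial σ R} (hp : (∏ i, X i) ∣ p)
    {m : τ →₀ ℕ} (hm : coeff m (rename f p) ≠ 0) : (m.support : Set τ) = Set.range f := by
  classical
  obtain ⟨u, rfl, hu⟩ := coeff_rename_ne_zero f p m hm
  rw [Finsupp.mapDomain_support_of_injective hf, support_eq_univ_of_prod_X_dvd hp hu,
    Finset.coe_image, Finset.coe_univ, Set.image_univ]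

/-- `Rset d` is, by definition, the set of `sumRename d f` with every `f n ∈ Iset n`. -/
def sumRename (d : ℕ) {K : ℕ} (f : (n : Fin K) → MvPolynomial (Fin n.1) R) :
    MvPolynomial (Fin d) R :=
  ∑ n : Fin K, ∑ α : StrInc n.1 d, rename α.1 (f n)

lemma sumRename_zero {d K : ℕ} :
    sumRename d (0 : (n : Fin K) → MvPolynomial (Fin n.1) R) = 0 := by
  simp [sumRename]

lemma coeff_mapDomain_sumRename {d K : ℕ} {f : (n : Fin K) → MvPolynomial (Fin n.1) R}
    (hf : ∀ n, (∏ i, X i) ∣ f n) {n₀ : Fin K} (β₀ : StrInc n₀.1 d) {u : Fin n₀.1 →₀ ℕ}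
    (hu : u.support = Finset.univ) :
    coeff (u.mapDomain β₀.1) (sumRename d f) = coeff u (f n₀) := by
  classical
  have hrange : ((u.mapDomain β₀.1).support : Set (Fin d)) = Set.range β₀.1 := by
    rw [Finsupp.mapDomain_support_of_injective β₀.2.injective, hu, Finset.coe_image,
      Finset.coe_univ, Set.image_univ]
  rw [sumRename, ← Fintype.sum_sigma', coeff_sum,
    Fintype.sum_eq_single (⟨n₀, β₀⟩ : Σ n : Fin K, StrInc n.1 d),
    coeff_rename_mapDomain _ β₀.2.injective]
  rintro ⟨n, β⟩ hne
  by_contra hc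
  exact hne (StrInc.sigma_eq_of_range_eq
    ((coe_support_eq_range_of_coeff_rename_ne_zero β.2.injective (hf n) hc).symm.trans hrange))

lemma eq_zero_of_sumRename_eq_zero {d K : ℕ} (hK : K ≤ d + 1)
    {f : (n : Fin K) → MvPolynomial (Fin n.1) R} (hf : ∀ n, (∏ i, X i) ∣ f n)
    (h : sumRename d f = 0) (n : Fin K) : f n = 0 := by
  ext u
  by_contra hu
  have hn : n.1 ≤ d := by omega
  have := coeff_mapDomain_sumRename hf ⟨Fin.castLE hn, Fin.strictMono_castLE hn⟩
    (support_eq_univ_of_prod_X_dvd (hf n) hu)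
  rw [h, coeff_zero] at this
  exact hu this.symm

lemma sumRename_eq_sumRename_init_add {d K : ℕ}
    (f : (n : Fin (K + 1)) → MvPolynomial (Fin n.1) R) :
    sumRename d f = sumRename d (Fin.init f) + ∑ α : StrInc K d, rename α.1 (f (Fin.last K)) :=
  Fin.sum_univ_castSucc _

lemma sumRename_eq_sumRename_init {d K : ℕ} (hK : d < K)
    (f : (n : Fin (K + 1)) → MvPolynomial (Fin n.1) R) :
    sumRename d f = sumRename d (Fin.init f) := by
  have := StrInc.isEmpty_of_lt hK
  rw [sumRename_eq_sumRename_init_add, Finset.univ_eq_empty, Finset.sum_empty, add_zero]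

lemma sum_rename_strInc_self {k : ℕ} (p : MvPolynomial (Fin k) R) :
    ∑ α : StrInc k k, rename α.1 p = p := by
  rw [Fintype.sum_unique]
  exact rename_id_apply p

lemma sumRename_snoc_zero {k : ℕ} (p : MvPolynomial (Fin k) R) :
    sumRename k (Fin.snoc (α := fun n : Fin (k + 1) => MvPolynomial (Fin n.1) R) 0 p) = p := by
  rw [sumRename_eq_sumRename_init_add, Fin.init_snoc, Fin.snoc_last, sum_rename_strInc_self,
    sumRename_zero, zero_add]

lemma prod_X_dvd_snoc {K : ℕ} {g : (n : Fin K) → MvPolynomial (Fin n.1) R}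
    {p : MvPolynomial (Fin K) R} (hg : ∀ n, (∏ i, X i) ∣ g n) (hp : (∏ i, X i) ∣ p) :
    ∀ n, (∏ i, X i) ∣ Fin.snoc (α := fun n : Fin (K + 1) => MvPolynomial (Fin n.1) R) g p n :=
  Fin.forall_fin_succ'.2 ⟨fun n => by simpa using hg n, by simpa using hp⟩

end SumRename

lemma projT_comp_rename_castSucc (d : ℕ) :
    (projT d).comp (rename Fin.castSucc) = AlgHom.id ℚ _ :=
  algHom_ext fun i => by simp [projT]

lemma projT_eq_zero_of_X_last_dvd {d : ℕ} {p : MvPolynomial (Fin (d + 1)) ℚ}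
    (h : X (Fin.last d) ∣ p) : projT d p = 0 := by
  simpa [projT] using map_dvd (projT d) h

lemma projT_eq_zero_of_mem_Iset {d : ℕ} {p : MvPolynomial (Fin (d + 1)) ℚ}
    (hp : p ∈ Iset (d + 1)) : projT d p = 0 :=
  projT_eq_zero_of_X_last_dvd ((Finset.dvd_prod_of_mem X (Finset.mem_univ _)).trans hp)

lemma sum_projT_rename {n d : ℕ} {p : MvPolynomial (Fin n) ℚ} (hp : (∏ i, X i) ∣ p) :
    ∑ α : StrInc n (d + 1), projT d (rename α.1 p) = ∑ β : StrInc n d, rename β.1 p := by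
  refine (Fintype.sum_of_injective StrInc.castSucc StrInc.castSucc_injective _ _
    (fun α hα => ?_) (fun β => ?_)).symm
  · obtain ⟨j, hj⟩ := StrInc.exists_eq_last_of_notMem_range_castSucc hα
    refine projT_eq_zero_of_X_last_dvd ?_
    rw [← hj, ← rename_X]
    exact map_dvd _ ((Finset.dvd_prod_of_mem X (Finset.mem_univ j)).trans hp)
  · rw [StrInc.castSucc, ← rename_rename, ← AlgHom.comp_apply, projT_comp_rename_castSucc,
      AlgHom.id_apply]

lemma projT_sumRename {d K : ℕ} {f : (n : Fin K) → MvPolynomial (Fin n.1) ℚ}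
    (hf : ∀ n, (∏ i, X i) ∣ f n) : projT d (sumRename (d + 1) f) = sumRename d f := by
  simp only [sumRename, map_sum, sum_projT_rename (hf _)]

lemma Iset_subset_Rset (d : ℕ) : Iset d ⊆ Rset d :=
  fun p hp => ⟨_, prod_X_dvd_snoc (fun _ => dvd_zero _) hp, (sumRename_snoc_zero p).symm⟩

lemma mem_Iset_of_mem_Rset_of_projT_eq_zero {d : ℕ} {F : MvPolynomial (Fin (d + 1)) ℚ}
    (hF : F ∈ Rset (d + 1)) (hproj : projT d F = 0) : F ∈ Iset (d + 1) := by
  obtain ⟨f, hf, rfl⟩ := hF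
  change projT d (sumRename (d + 1) f) = 0 at hproj
  rw [projT_sumRename hf, sumRename_eq_sumRename_init d.lt_succ_self] at hproj
  have hinit : Fin.init f = 0 :=
    funext (eq_zero_of_sumRename_eq_zero le_rfl (fun n => hf n.castSucc) hproj)
  change sumRename (d + 1) f ∈ _
  rw [sumRename_eq_sumRename_init_add, hinit, sumRename_zero, zero_add, sum_rename_strInc_self]
  exact hf (Fin.last _)

lemma projT_image_Rset (d : ℕ) : projT d '' Rset (d + 1) = Rset d := by
  refine Set.Subset.antisymm ?_ ?_
  · rintro _ ⟨_, ⟨f, hf, rfl⟩, rfl⟩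
    exact ⟨Fin.init f, fun n => hf n.castSucc,
      (projT_sumRename hf).trans (sumRename_eq_sumRename_init d.lt_succ_self f)⟩
  · rintro _ ⟨g, hg, rfl⟩
    have hf := prod_X_dvd_snoc hg (dvd_zero _)
    refine ⟨_, ⟨Fin.snoc g 0, hf, rfl⟩, ?_⟩
    change projT d (sumRename (d + 1) _) = sumRename d g
    rw [projT_sumRename hf, sumRename_eq_sumRename_init d.lt_succ_self, Fin.init_snoc]

theorem stmt_1 (d : ℕ) :
    {F | F ∈ Rset (d+1) ∧ projT d F = 0} = Iset (d+1) ∧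
    (projT d) '' Rset (d+1) = Rset d := by
  refine ⟨Set.ext fun F => ⟨fun hF => mem_Iset_of_mem_Rset_of_projT_eq_zero hF.1 hF.2,
    fun hF => ⟨Iset_subset_Rset _ hF, projT_eq_zero_of_mem_Iset hF⟩⟩, projT_image_Rset d⟩

end
end

section
/- An element F of R_d uniquely determines its components: if F = Σ_{n=0}^d Σ_{α:[1,n]↪[1,d]} α_* f_n with f_n ∈ I_n, and F = Σ_I a_I t^I is the expansion of F into monomials (multi-index notation, I ∈ ℕ_0^d), then for each 0 ≤ n ≤ d one has f_n = Σ_I a_I t^I where I runs over all tuples (i_1,…,i_d) with i_1,…,i_n > 0 and i_{n+1} = … = i_d = 0. In particular the f_n are uniquely determined by F. -/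
open MvPolynomial

/-!
A monomial of `rename α (f n)`, with `f n ∈ I_n` and `α` injective, has support exactly the
image of `α`. Hence the monomial `t^I` with `I = (i_1, …, i_n, 0, …, 0)`, all `i_k > 0`, has
support `{1, …, n}` and occurs in exactly one summand of `F`: the one with `α` the inclusion
`Fin n ↪ Fin d`, since a strictly increasing map is determined by its image. Its coefficient
there is the coefficient of `t_1^{i_1} ⋯ t_n^{i_n}` in `f_n`; all other coefficients of `f_n`
vanish because `f_n ∈ I_n`.
-/

open MvPolynomial Finset

section ProdX

variable {σ τ R : Type*} [CommSemiring R] [Fintype σ]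

lemma coeff_prod_X_mul_eq_zero (q : MvPolynomial σ R) {u : σ →₀ ℕ} {i : σ} (hi : u i = 0) :
    coeff u ((∏ j, X j) * q) = 0 := by
  classical
  rw [← prod_erase_mul _ _ (mem_univ i), mul_assoc, mul_comm (X i) q, ← mul_assoc, coeff_mul_X']
  simp [hi]

lemma support_eq_univ_of_coeff_prod_X_mul_ne_zero (q : MvPolynomial σ R) {u : σ →₀ ℕ}
    (hu : coeff u ((∏ j, X j) * q) ≠ 0) : u.support = univ :=
  eq_univ_iff_forall.2 fun _ => Finsupp.mem_support_iff.2 fun hi =>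
    hu (coeff_prod_X_mul_eq_zero q hi)

lemma support_eq_image_of_coeff_rename_prod_X_mul_ne_zero [DecidableEq τ] {f : σ → τ}
    (hf : Function.Injective f) (q : MvPolynomial σ R) {M : τ →₀ ℕ}
    (hM : coeff M (rename f ((∏ j, X j) * q)) ≠ 0) : M.support = univ.image f := by
  obtain ⟨u, rfl, hu⟩ := coeff_rename_ne_zero _ _ _ hM
  rw [Finsupp.mapDomain_support_of_injective hf,
    support_eq_univ_of_coeff_prod_X_mul_ne_zero q hu]

end ProdX

lemma coeff_eq_zero_of_mem_Iset {n : ℕ} {h : MvPolynomial (Fin n) ℚ} (hh : h ∈ Iset n)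
    {u : Fin n →₀ ℕ} (hu : ¬ ∀ i, 0 < u i) : coeff u h = 0 := by
  obtain ⟨q, rfl⟩ := hh
  obtain ⟨i, hi⟩ := not_forall.1 hu
  exact coeff_prod_X_mul_eq_zero q (Nat.eq_zero_of_not_pos hi)

lemma support_eq_image_of_coeff_rename_ne_zero {p d : ℕ} {h : MvPolynomial (Fin p) ℚ}
    (hh : h ∈ Iset p) (α : StrInc p d) {M : Fin d →₀ ℕ}
    (hM : coeff M (rename α.1 h) ≠ 0) :
    M.support = univ.image α.1 := by
  obtain ⟨q, rfl⟩ := hh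
  exact support_eq_image_of_coeff_rename_prod_X_mul_ne_zero α.2.injective q hM

lemma StrInc.card_image {p d : ℕ} (α : StrInc p d) : (univ.image α.1).card = p := by
  rw [card_image_of_injective _ α.2.injective, card_univ, Fintype.card_fin]

lemma StrInc.eq_castLE_of_image_eq {n d : ℕ} (hn : n ≤ d) (α : StrInc n d)
    (h : univ.image α.1 = univ.image (Fin.castLE hn)) :
    α = ⟨Fin.castLE hn, Fin.strictMono_castLE hn⟩ := by
  refine Subtype.ext ((α.2.range_inj (Fin.strictMono_castLE hn)).1 ?_)
  simpa only [coe_image, coe_univ, Set.image_univ] using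
    congrArg (fun s : Finset (Fin d) => (s : Set (Fin d))) h

lemma coeff_embDomain_castLE_sum_rename {d : ℕ}
    (f : (n : Fin (d+1)) → MvPolynomial (Fin n.1) ℚ) (hf : ∀ n, f n ∈ Iset n.1)
    (n : Fin (d+1)) {m : Fin n.1 →₀ ℕ} (hm : ∀ i, 0 < m i) :
    coeff (m.embDomain (Fin.castLEEmb n.is_le))
      (∑ k : Fin (d+1), ∑ α : StrInc k.1 d, rename α.1 (f k)) = coeff m (f n) := by
  set M := m.embDomain (Fin.castLEEmb n.is_le)
  have hM : M.support = univ.image (Fin.castLE n.is_le) := by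
    have : m.support = univ := eq_univ_iff_forall.2 fun i => Finsupp.mem_support_iff.2 (hm i).ne'
    rw [Finsupp.support_embDomain, this, map_eq_image]
    rfl
  rw [coeff_sum, sum_eq_single n, coeff_sum,
    sum_eq_single (⟨Fin.castLE n.is_le, Fin.strictMono_castLE _⟩ : StrInc n.1 d)]
  · simp only [M, Finsupp.embDomain_eq_mapDomain]
    exact coeff_rename_mapDomain _ (Fin.castLE_injective _) _ _
  · intro α _ hα
    by_contra hne
    exact hα (StrInc.eq_castLE_of_image_eq _ α
      ((support_eq_image_of_coeff_rename_ne_zero (hf n) α hne).symm.trans hM))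
  · simp
  · intro n' _ hn'
    rw [coeff_sum]
    refine sum_eq_zero fun α _ => ?_
    by_contra hne
    have := congrArg card
      ((support_eq_image_of_coeff_rename_ne_zero (hf n') α hne).symm.trans hM)
    rw [StrInc.card_image, StrInc.card_image ⟨_, Fin.strictMono_castLE n.is_le⟩] at this
    exact hn' (Fin.ext this)
  · simp

lemma coeff_eq_ite_coeff_sum_rename {d : ℕ} (f : (n : Fin (d+1)) → MvPolynomial (Fin n.1) ℚ)
    (hf : ∀ n, f n ∈ Iset n.1) (n : Fin (d+1)) (m : Fin n.1 →₀ ℕ) :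
    coeff m (f n) =
      if ∀ i, 0 < m i then
        coeff (m.embDomain (Fin.castLEEmb n.is_le))
          (∑ k : Fin (d+1), ∑ α : StrInc k.1 d, rename α.1 (f k)) else 0 := by
  split_ifs with hm
  · exact (coeff_embDomain_castLE_sum_rename f hf n hm).symm
  · exact coeff_eq_zero_of_mem_Iset (hf n) hm

theorem stmt_2 (d : ℕ) (f g : (n : Fin (d+1)) → MvPolynomial (Fin n.1) ℚ)
    (hf : ∀ n, f n ∈ Iset n.1)
    (F : MvPolynomial (Fin d) ℚ)
    (hF : F = ∑ n : Fin (d+1), ∑ α : StrInc n.1 d, rename α.1 (f n)) :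
    (∀ (n : Fin (d+1)) (m : Fin n.1 →₀ ℕ),
      coeff m (f n) =
        if ∀ i, 0 < m i then
          coeff (m.embDomain (Fin.castLEEmb n.is_le)) F else 0) ∧
    ((∀ n, g n ∈ Iset n.1) →
      F = ∑ n : Fin (d+1), ∑ α : StrInc n.1 d, rename α.1 (g n) → g = f) := by
  subst hF
  refine ⟨coeff_eq_ite_coeff_sum_rename f hf, fun hg hG => ?_⟩
  funext n
  ext m
  rw [coeff_eq_ite_coeff_sum_rename g hg, coeff_eq_ite_coeff_sum_rename f hf, hG]
end

section
/- The multiplication on R defined by (f_n)·(g_n) = (h_n), where h_n := Σ_{(α,β)} (α_* f_p)(β_* g_q) with the sum over all pairs of strictly increasing maps α : [1,p] → [1,n], β : [1,q] → [1,n] whose images together cover {1,…,n}, makes R a commutative associative graded ℚ-algebra with unit element 1 ∈ I_0. -/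
open MvPolynomial

noncomputable section

/-! For each `d`, `θ_d f = ∑ₙ ∑_{α : [n] ↗ [d]} α_* fₙ` is multiplicative,
`θ_d (f·g) = θ_d f · θ_d g`, because a pair of increasing maps into `[d]` factors uniquely, as a
covering pair, through the enumeration of the union of their images. Conversely `f_d` is the part
of `θ_d f` on the monomials in which every variable occurs, and so is `(f·g)_d` of
`θ_d f · θ_d g`: for `F ∈ I_p`, `G ∈ I_q` the product `α_* F · β_* G` lies in `I_d` when `α, β`
cover `[d]` and misses some variable otherwise. Associativity and the unit law are thus inherited
from `ℚ[t_1,…,t_d]`. -/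

open Finset

namespace StrInc

variable {p q m n : ℕ}

theorem isEmpty_of_lt_s3 (h : n < p) : IsEmpty (StrInc p n) :=
  ⟨fun α => h.not_ge (by simpa using Fintype.card_le_of_injective α.1 α.2.injective)⟩

instance : Unique (StrInc 0 n) where
  default := ⟨Fin.elim0, fun a => a.elim0⟩
  uniq _ := Subtype.ext (funext fun j => j.elim0)

instance : Unique (StrInc n n) where
  default := ⟨id, strictMono_id⟩
  uniq α := Subtype.ext α.2.eq_id

theorem exists_notMem_range_of_lt (α : StrInc p n) (h : p < n) : ∃ i, i ∉ Set.range α.1 := by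
  by_contra! hα
  exact h.not_ge (by simpa using Fintype.card_le_of_surjective α.1 fun i => hα i)

def comp (δ : StrInc m n) (α : StrInc p m) : StrInc p n :=
  ⟨δ.1 ∘ α.1, δ.2.comp α.2⟩

def enum (S : Finset (Fin n)) : StrInc S.card n :=
  ⟨S.orderEmbOfFin rfl, (S.orderEmbOfFin rfl).strictMono⟩

def factor (S : Finset (Fin n)) (α : StrInc p n) (h : ∀ j, α.1 j ∈ S) : StrInc p S.card :=
  ⟨fun j => (S.orderIsoOfFin rfl).symm ⟨α.1 j, h j⟩,
    fun _ _ hab => (S.orderIsoOfFin rfl).symm.strictMono (Subtype.mk_lt_mk.2 (α.2 hab))⟩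

theorem enum_comp_factor (S : Finset (Fin n)) (α : StrInc p n) (h : ∀ j, α.1 j ∈ S) :
    (enum S).comp (factor S α h) = α := by
  refine Subtype.ext (funext fun j => ?_)
  change S.orderEmbOfFin rfl ((S.orderIsoOfFin rfl).symm ⟨α.1 j, h j⟩) = α.1 j
  rw [← coe_orderIsoOfFin_apply, OrderIso.apply_symm_apply]

theorem factor_apply_eq {S : Finset (Fin n)} {α : StrInc p n} {h : ∀ j, α.1 j ∈ S} {j : Fin p}
    {i : Fin S.card} (hji : α.1 j = S.orderIsoOfFin rfl i) : (factor S α h).1 j = i :=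
  (OrderIso.symm_apply_eq _).2 (Subtype.ext hji)

end StrInc

section Covers

variable {p q n : ℕ} {α : StrInc p n} {β : StrInc q n}

theorem Covers.image_union_image_eq_univ (cov : Covers α β) :
    univ.image α.1 ∪ univ.image β.1 = univ := by
  refine eq_univ_iff_forall.mpr fun i => ?_
  rcases cov i with ⟨j, rfl⟩ | ⟨j, rfl⟩
  · exact mem_union_left _ (mem_image_of_mem _ (mem_univ j))
  · exact mem_union_right _ (mem_image_of_mem _ (mem_univ j))

theorem Covers.le_add (cov : Covers α β) : n ≤ p + q :=
  calc n = (univ.image α.1 ∪ univ.image β.1).card := by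
        rw [cov.image_union_image_eq_univ, card_fin]
    _ ≤ (univ.image α.1).card + (univ.image β.1).card := card_union_le _ _
    _ ≤ p + q :=
        add_le_add (card_image_le.trans_eq (card_fin p)) (card_image_le.trans_eq (card_fin q))

end Covers

abbrev PairFactorization (n p q : ℕ) : Type :=
  Σ m : Fin (n+1), StrInc m.1 n × StrInc p m.1 × StrInc q m.1

namespace PairFactorization

variable {n p q : ℕ}

def compose (x : PairFactorization n p q) : StrInc p n × StrInc q n :=
  (x.2.1.comp x.2.2.1, x.2.1.comp x.2.2.2)

def ofPair (y : StrInc p n × StrInc q n) : PairFactorization n p q :=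
  let S := univ.image y.1.1 ∪ univ.image y.2.1
  ⟨⟨S.card, Nat.lt_succ_of_le ((card_le_univ S).trans_eq (card_fin n))⟩, StrInc.enum S,
    StrInc.factor S y.1 fun j => mem_union_left _ (mem_image_of_mem _ (mem_univ j)),
    StrInc.factor S y.2 fun j => mem_union_right _ (mem_image_of_mem _ (mem_univ j))⟩

theorem compose_ofPair (y : StrInc p n × StrInc q n) : (ofPair y).compose = y :=
  Prod.ext (StrInc.enum_comp_factor _ _ _) (StrInc.enum_comp_factor _ _ _)

theorem covers_ofPair (y : StrInc p n × StrInc q n) :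
    Covers (ofPair y).2.2.1 (ofPair y).2.2.2 := by
  intro i
  rcases mem_union.mp ((univ.image y.1.1 ∪ univ.image y.2.1).orderIsoOfFin rfl i).2 with h | h
  · obtain ⟨j, -, hj⟩ := mem_image.mp h
    exact Or.inl ⟨j, StrInc.factor_apply_eq hj⟩
  · obtain ⟨j, -, hj⟩ := mem_image.mp h
    exact Or.inr ⟨j, StrInc.factor_apply_eq hj⟩

theorem ext_of_card_eq {m m' : ℕ} {hm : m < n+1} {hm' : m' < n+1}
    {δ : StrInc m n} {δ' : StrInc m' n} {α : StrInc p m} {α' : StrInc p m'}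
    {β : StrInc q m} {β' : StrInc q m'} (h : m = m')
    (hδ : ∀ i, δ.1 i = δ'.1 (Fin.cast h i))
    (hα : ∀ j, (α.1 j : ℕ) = α'.1 j) (hβ : ∀ j, (β.1 j : ℕ) = β'.1 j) :
    (⟨⟨m, hm⟩, δ, α, β⟩ : PairFactorization n p q) = ⟨⟨m', hm'⟩, δ', α', β'⟩ := by
  subst h
  exact Sigma.ext rfl (heq_of_eq (Prod.ext (Subtype.ext (funext hδ))
    (Prod.ext (Subtype.ext (funext fun j => Fin.ext (hα j)))
      (Subtype.ext (funext fun j => Fin.ext (hβ j))))))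

theorem ofPair_compose (x : PairFactorization n p q) (cov : Covers x.2.2.1 x.2.2.2) :
    ofPair x.compose = x := by
  obtain ⟨⟨m, hm⟩, δ, α, β⟩ := x
  have hS : univ.image (δ.1 ∘ α.1) ∪ univ.image (δ.1 ∘ β.1) = univ.image δ.1 := by
    rw [← image_image, ← image_image (g := δ.1), ← image_union,
      cov.image_union_image_eq_univ]
  set S := univ.image (δ.1 ∘ α.1) ∪ univ.image (δ.1 ∘ β.1)
  have hcard : S.card = m := by
    rw [hS, card_image_of_injective _ δ.2.injective, card_univ, Fintype.card_fin]
  have hmem : ∀ k, δ.1 k ∈ S := fun k => by rw [hS]; exact mem_image_of_mem _ (mem_univ k)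
  have hδ : ∀ i, (StrInc.enum S).1 i = δ.1 (Fin.cast hcard i) :=
    congrFun (orderEmbOfFin_unique rfl (fun _ => hmem _) fun _ _ hij => δ.2 hij).symm
  have hfactor : ∀ {r : ℕ} (γ : StrInc r m) (h : ∀ j, (δ.comp γ).1 j ∈ S) (j : Fin r),
      ((StrInc.factor S (δ.comp γ) h).1 j : ℕ) = γ.1 j := fun γ h j =>
    congrArg Fin.val (δ.2.injective ((hδ _).symm.trans
      (congrFun (congrArg Subtype.val (StrInc.enum_comp_factor S (δ.comp γ) h)) j)))
  exact ext_of_card_eq hcard hδ (hfactor α _) (hfactor β _)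

end PairFactorization

open PairFactorization in
theorem sum_covers_comp_eq_sum {M : Type*} [AddCommMonoid M] (n p q : ℕ)
    (t : StrInc p n → StrInc q n → M) :
    ∑ m : Fin (n+1), ∑ δ : StrInc m.1 n, ∑ α : StrInc p m.1, ∑ β : StrInc q m.1,
      (if Covers α β then t (δ.comp α) (δ.comp β) else 0)
    = ∑ α : StrInc p n, ∑ β : StrInc q n, t α β := by
  have hsigma :
      ∑ m : Fin (n+1), ∑ δ : StrInc m.1 n, ∑ α : StrInc p m.1, ∑ β : StrInc q m.1,
      (if Covers α β then t (δ.comp α) (δ.comp β) else 0)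
      = ∑ x ∈ univ.filter (fun x : PairFactorization n p q => Covers x.2.2.1 x.2.2.2),
          t x.compose.1 x.compose.2 := by
    simp only [sum_filter, ← univ_sigma_univ, sum_sigma, Fintype.sum_prod_type]
    rfl
  rw [hsigma, ← Fintype.sum_prod_type']
  exact sum_nbij' compose ofPair (fun _ _ => mem_univ _)
    (fun y _ => mem_filter.mpr ⟨mem_univ _, covers_ofPair y⟩)
    (fun x hx => ofPair_compose x (mem_filter.mp hx).2) (fun y _ => compose_ofPair y)
    (fun _ _ => rfl)

section FullSupportPart

variable {σ τ R : Type*} [CommSemiring R]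

open Classical in
def fullSupportPart (σ R : Type*) [CommSemiring R] : MvPolynomial σ R →+ MvPolynomial σ R :=
  (AddMonoidAlgebra.coeffAddEquiv.symm.toAddMonoidHom.comp
    (Finsupp.filterAddHom fun u : σ →₀ ℕ => ∀ i, u i ≠ 0)).comp
    AddMonoidAlgebra.coeffAddEquiv.toAddMonoidHom

open Classical in
theorem coeff_fullSupportPart_of_forall_ne_zero (P : MvPolynomial σ R) {v : σ →₀ ℕ}
    (hv : ∀ i, v i ≠ 0) : coeff v (fullSupportPart σ R P) = coeff v P :=
  Finsupp.filter_apply_pos _ _ hv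

open Classical in
theorem coeff_fullSupportPart_of_eq_zero (P : MvPolynomial σ R) {v : σ →₀ ℕ} {i : σ}
    (hv : v i = 0) : coeff v (fullSupportPart σ R P) = 0 :=
  Finsupp.filter_apply_neg _ _ fun h => h i hv

theorem fullSupportPart_eq_self_of_prod_X_dvd [Fintype σ] {P : MvPolynomial σ R}
    (h : (∏ i, X i) ∣ P) : fullSupportPart σ R P = P := by
  classical
  ext v
  by_cases hv : ∀ i, v i ≠ 0
  · exact coeff_fullSupportPart_of_forall_ne_zero P hv
  obtain ⟨i, hi⟩ := not_forall_not.mp hv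
  obtain ⟨Q, rfl⟩ := h
  rw [coeff_fullSupportPart_of_eq_zero _ hi, ← mul_prod_erase univ _ (mem_univ i), mul_assoc,
    coeff_X_mul', if_neg (by simpa using hi)]

theorem fullSupportPart_eq_zero_of_notMem_vars {P : MvPolynomial σ R} {i : σ} (h : i ∉ P.vars) :
    fullSupportPart σ R P = 0 := by
  ext v
  by_cases hv : v i = 0
  · exact coeff_fullSupportPart_of_eq_zero P hv
  by_cases hv' : ∀ j, v j ≠ 0
  · rw [coeff_fullSupportPart_of_forall_ne_zero P hv', coeff_zero]
    by_contra hne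
    exact h ((mem_vars_iff_mem_support i).2
      ⟨v, mem_support_iff.2 hne, Finsupp.mem_support_iff.2 hv⟩)
  · obtain ⟨j, hj⟩ := not_forall_not.mp hv'
    exact coeff_fullSupportPart_of_eq_zero P hj

theorem notMem_vars_rename {f : σ → τ} {i : τ} (hi : i ∉ Set.range f) (P : MvPolynomial σ R) :
    i ∉ (rename f P).vars := fun h =>
  let ⟨j, _, hj⟩ := mem_vars_rename f P h
  hi ⟨j, hj⟩

theorem prod_X_dvd_rename_mul_rename {p q n : ℕ} {α : StrInc p n} {β : StrInc q n}
    (cov : Covers α β) {F : MvPolynomial (Fin p) R} {G : MvPolynomial (Fin q) R}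
    (hF : (∏ i, X i) ∣ F) (hG : (∏ i, X i) ∣ G) :
    (∏ i, X i) ∣ rename α.1 F * rename β.1 G := by
  classical
  have rename_prod_X : ∀ {r : ℕ} (γ : StrInc r n),
      rename γ.1 (∏ i, X i : MvPolynomial (Fin r) R) = ∏ i ∈ univ.image γ.1, X i := by
    intro r γ
    rw [map_prod, prod_image fun _ _ _ _ h => γ.2.injective h]
    simp only [rename_X]
  have hcover : (∏ i, X i : MvPolynomial (Fin n) R) ∣
      (∏ i ∈ univ.image α.1, X i) * ∏ i ∈ univ.image β.1, X i := by
    rw [← prod_union_inter, cov.image_union_image_eq_univ]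
    exact dvd_mul_right _ _
  exact hcover.trans
    (mul_dvd_mul (rename_prod_X α ▸ map_dvd _ hF) (rename_prod_X β ▸ map_dvd _ hG))

end FullSupportPart

section CoverMul

variable {R : Type*} [CommSemiring R] {p q n : ℕ}

def coverMul (n : ℕ) (F : MvPolynomial (Fin p) R) (G : MvPolynomial (Fin q) R) :
    MvPolynomial (Fin n) R :=
  ∑ α : StrInc p n, ∑ β : StrInc q n,
    if Covers α β then rename α.1 F * rename β.1 G else 0

theorem mulR_apply (f g : Rbig) (n : ℕ) :
    mulR f g n = ∑ p : Fin (n+1), ∑ q : Fin (n+1), coverMul n (f p) (g q) :=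
  rfl

theorem coverMul_comm (F : MvPolynomial (Fin p) R) (G : MvPolynomial (Fin q) R) :
    coverMul n F G = coverMul n G F := by
  rw [coverMul, coverMul, sum_comm]
  refine sum_congr rfl fun β _ => sum_congr rfl fun α _ => ?_
  simp only [Covers, or_comm, mul_comm]

theorem coverMul_eq_zero_of_lt_left (h : n < p) (F : MvPolynomial (Fin p) R)
    (G : MvPolynomial (Fin q) R) : coverMul n F G = 0 := by
  have := StrInc.isEmpty_of_lt_s3 h
  simp [coverMul]

theorem coverMul_eq_zero_of_lt_right (h : n < q) (F : MvPolynomial (Fin p) R)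
    (G : MvPolynomial (Fin q) R) : coverMul n F G = 0 := by
  rw [coverMul_comm, coverMul_eq_zero_of_lt_left h]

theorem coverMul_eq_zero_of_add_lt (h : p + q < n) (F : MvPolynomial (Fin p) R)
    (G : MvPolynomial (Fin q) R) : coverMul n F G = 0 :=
  sum_eq_zero fun _ _ => sum_eq_zero fun _ _ => if_neg fun cov => h.not_ge cov.le_add

@[simp]
theorem coverMul_zero_left (G : MvPolynomial (Fin q) R) :
    coverMul n (0 : MvPolynomial (Fin p) R) G = 0 := by
  simp [coverMul]

@[simp]
theorem coverMul_zero_right (F : MvPolynomial (Fin p) R) :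
    coverMul n F (0 : MvPolynomial (Fin q) R) = 0 := by
  simp [coverMul]

theorem coverMul_add_left (F F' : MvPolynomial (Fin p) R) (G : MvPolynomial (Fin q) R) :
    coverMul n (F + F') G = coverMul n F G + coverMul n F' G := by
  simp only [coverMul, ← sum_add_distrib, map_add, add_mul, ite_add_zero]

theorem coverMul_add_right (F : MvPolynomial (Fin p) R) (G G' : MvPolynomial (Fin q) R) :
    coverMul n F (G + G') = coverMul n F G + coverMul n F G' := by
  simp only [coverMul, ← sum_add_distrib, map_add, mul_add, ite_add_zero]

theorem coverMul_smul_left (c : R) (F : MvPolynomial (Fin p) R) (G : MvPolynomial (Fin q) R) :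
    coverMul n (c • F) G = c • coverMul n F G := by
  simp only [coverMul, smul_sum, map_smul, smul_mul_assoc, smul_ite, smul_zero]

theorem coverMul_smul_right (c : R) (F : MvPolynomial (Fin p) R) (G : MvPolynomial (Fin q) R) :
    coverMul n F (c • G) = c • coverMul n F G := by
  simp only [coverMul, smul_sum, map_smul, mul_smul_comm, smul_ite, smul_zero]

theorem MvPolynomial.IsHomogeneous.coverMul {r s : ℕ} {F : MvPolynomial (Fin p) R}
    {G : MvPolynomial (Fin q) R} (hF : F.IsHomogeneous r) (hG : G.IsHomogeneous s) :
    (coverMul n F G).IsHomogeneous (r + s) := by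
  refine IsHomogeneous.sum _ _ _ fun α _ => IsHomogeneous.sum _ _ _ fun β _ => ?_
  split_ifs
  · exact hF.rename_isHomogeneous.mul hG.rename_isHomogeneous
  · exact isHomogeneous_zero _ _ _

theorem prod_X_dvd_coverMul {F : MvPolynomial (Fin p) R} {G : MvPolynomial (Fin q) R}
    (hF : (∏ i, X i) ∣ F) (hG : (∏ i, X i) ∣ G) : (∏ i, X i) ∣ coverMul n F G := by
  refine dvd_sum fun α _ => dvd_sum fun β _ => ?_
  split_ifs with cov
  · exact prod_X_dvd_rename_mul_rename cov hF hG
  · exact dvd_zero _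

theorem sum_rename_coverMul (F : MvPolynomial (Fin p) R) (G : MvPolynomial (Fin q) R) :
    ∑ m : Fin (n+1), ∑ δ : StrInc m.1 n, rename δ.1 (coverMul m F G)
      = (∑ α : StrInc p n, rename α.1 F) * ∑ β : StrInc q n, rename β.1 G := by
  simp only [coverMul, map_sum, apply_ite (rename _), map_mul, rename_rename, map_zero]
  rw [sum_mul_sum]
  exact sum_covers_comp_eq_sum n p q fun α β => rename α.1 F * rename β.1 G

theorem fullSupportPart_sum_rename_mul_sum_rename {F : MvPolynomial (Fin p) R}
    {G : MvPolynomial (Fin q) R} (hF : (∏ i, X i) ∣ F) (hG : (∏ i, X i) ∣ G) :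
    fullSupportPart (Fin n) R
        ((∑ α : StrInc p n, rename α.1 F) * ∑ β : StrInc q n, rename β.1 G) = coverMul n F G := by
  rw [coverMul, sum_mul_sum, map_sum]
  refine sum_congr rfl fun α _ => (map_sum _ _ _).trans (sum_congr rfl fun β _ => ?_)
  split_ifs with cov
  · exact fullSupportPart_eq_self_of_prod_X_dvd (prod_X_dvd_rename_mul_rename cov hF hG)
  · obtain ⟨i, hi⟩ := not_forall.mp cov
    refine fullSupportPart_eq_zero_of_notMem_vars (i := i) fun h => ?_
    obtain ⟨hα, hβ⟩ := not_or.mp hi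
    rcases mem_union.mp (vars_mul _ _ h) with h | h
    · exact notMem_vars_rename (fun ⟨j, hj⟩ => hα ⟨j, hj⟩) F h
    · exact notMem_vars_rename (fun ⟨j, hj⟩ => hβ ⟨j, hj⟩) G h

theorem fullSupportPart_sum_rename_of_lt (h : p < n) (F : MvPolynomial (Fin p) R) :
    fullSupportPart (Fin n) R (∑ α : StrInc p n, rename α.1 F) = 0 := by
  refine (map_sum _ _ _).trans (sum_eq_zero fun α _ => ?_)
  obtain ⟨i, hi⟩ := α.exists_notMem_range_of_lt h
  exact fullSupportPart_eq_zero_of_notMem_vars (notMem_vars_rename hi F)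

end CoverMul

theorem sum_fin_succ_eq_of_le {M : Type*} [AddCommMonoid M] {a b : ℕ} (hab : a ≤ b) (F : ℕ → M)
    (hF : ∀ k, a < k → F k = 0) : ∑ k : Fin (a+1), F k = ∑ k : Fin (b+1), F k := by
  rw [Fin.sum_univ_eq_sum_range F, Fin.sum_univ_eq_sum_range F]
  exact sum_subset (range_subset_range.mpr (by omega)) fun k _ hk =>
    hF k (by simpa using hk)

section Theta

variable {f g : Rbig}

theorem mulR_apply_of_le {n N : ℕ} (hN : n ≤ N) :
    mulR f g n = ∑ p : Fin (N+1), ∑ q : Fin (N+1), coverMul n (f p) (g q) := by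
  rw [mulR_apply, sum_fin_succ_eq_of_le hN fun p => ∑ q : Fin (n+1), coverMul n (f p) (g q)]
  · exact sum_congr rfl fun p _ => sum_fin_succ_eq_of_le hN (fun q => coverMul n (f p) (g q))
      fun q hq => coverMul_eq_zero_of_lt_right hq _ _
  · exact fun p hp => sum_eq_zero fun q _ => coverMul_eq_zero_of_lt_left hp _ _

theorem theta_mulR (n : ℕ) : theta n (mulR f g) = theta n f * theta n g := by
  calc theta n (mulR f g)
      = ∑ m : Fin (n+1), ∑ δ : StrInc m.1 n,
          rename δ.1 (∑ p : Fin (n+1), ∑ q : Fin (n+1), coverMul m (f p) (g q)) :=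
        sum_congr rfl fun m _ => sum_congr rfl fun δ _ => by
          rw [mulR_apply_of_le (Nat.lt_succ_iff.mp m.2)]
    _ = ∑ m : Fin (n+1), ∑ p : Fin (n+1), ∑ q : Fin (n+1),
          ∑ δ : StrInc m.1 n, rename δ.1 (coverMul m (f p) (g q)) := by
        simp only [map_sum]
        exact sum_congr rfl fun m _ => sum_comm.trans (sum_congr rfl fun p _ => sum_comm)
    _ = ∑ p : Fin (n+1), ∑ q : Fin (n+1),
          ∑ m : Fin (n+1), ∑ δ : StrInc m.1 n, rename δ.1 (coverMul m (f p) (g q)) :=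
        sum_comm.trans (sum_congr rfl fun p _ => sum_comm)
    _ = theta n f * theta n g := by
        simp only [sum_rename_coverMul, theta, sum_mul_sum]

theorem mulR_apply_eq_fullSupportPart (hf : ∀ k, f k ∈ Iset k) (hg : ∀ k, g k ∈ Iset k) (n : ℕ) :
    mulR f g n = fullSupportPart (Fin n) ℚ (theta n f * theta n g) := by
  rw [mulR_apply, theta, theta, sum_mul_sum, map_sum]
  refine sum_congr rfl fun p _ => ((map_sum _ _ _).trans (sum_congr rfl fun q _ => ?_)).symm
  exact fullSupportPart_sum_rename_mul_sum_rename (hf p) (hg q)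

theorem fullSupportPart_theta (hf : ∀ k, f k ∈ Iset k) (n : ℕ) :
    fullSupportPart (Fin n) ℚ (theta n f) = f n := by
  rw [theta, map_sum, Fin.sum_univ_castSucc, Fin.val_last,
    sum_eq_zero fun m _ => fullSupportPart_sum_rename_of_lt m.2 _, zero_add, Fintype.sum_unique,
    Subsingleton.elim (default : StrInc n n) ⟨id, strictMono_id⟩, rename_id_apply,
    fullSupportPart_eq_self_of_prod_X_dvd (hf n)]

theorem sing_zero_one_apply (n : ℕ) : sing 0 1 n = if n = 0 then 1 else 0 := by
  split_ifs with h
  · subst h; rfl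
  · exact dif_neg h

theorem theta_sing_zero_one (n : ℕ) : theta n (sing 0 1) = 1 := by
  rw [theta, Fin.sum_univ_succ, Fin.val_zero, Fintype.sum_unique, sing_zero_one_apply, if_pos rfl,
    map_one, add_eq_left]
  exact sum_eq_zero fun m _ => by simp [sing_zero_one_apply]

end Theta

theorem sing_zero_one_mem : sing 0 1 ∈ RsetAll := by
  refine ⟨fun n => ?_, (Set.finite_singleton 0).subset fun n hn => ?_⟩
  · rw [sing_zero_one_apply]
    split_ifs with h
    · subst h; exact ⟨1, by simp⟩
    · exact ⟨0, (mul_zero _).symm⟩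
  · by_contra h
    exact hn (by rw [sing_zero_one_apply, if_neg (by simpa using h)])

theorem exists_forall_lt_eq_zero {f : Rbig} (hf : f ∈ RsetAll) : ∃ N, ∀ k, N < k → f k = 0 := by
  obtain ⟨N, hN⟩ := hf.2.bddAbove
  exact ⟨N, fun k hk => not_not.mp fun h => hk.not_ge (hN h)⟩

theorem mulR_mem {f g : Rbig} (hf : f ∈ RsetAll) (hg : g ∈ RsetAll) : mulR f g ∈ RsetAll := by
  refine ⟨fun n => dvd_sum fun p _ => dvd_sum fun q _ => prod_X_dvd_coverMul (hf.1 p) (hg.1 q), ?_⟩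
  obtain ⟨Nf, hNf⟩ := exists_forall_lt_eq_zero hf
  obtain ⟨Ng, hNg⟩ := exists_forall_lt_eq_zero hg
  refine (Set.finite_Iic (Nf + Ng)).subset fun n hn => Set.mem_Iic.mpr (not_lt.mp fun hlt => hn ?_)
  rw [mulR_apply]
  refine sum_eq_zero fun p _ => sum_eq_zero fun q _ => ?_
  by_cases hp : Nf < p
  · rw [hNf p hp, coverMul_zero_left]
  by_cases hq : Ng < q
  · rw [hNg q hq, coverMul_zero_right]
  exact coverMul_eq_zero_of_add_lt (by omega) _ _

theorem mulR_comm (f g : Rbig) : mulR f g = mulR g f := by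
  funext n
  rw [mulR_apply, mulR_apply, sum_comm]
  exact sum_congr rfl fun q _ => sum_congr rfl fun p _ => coverMul_comm _ _

theorem mulR_assoc {f g h : Rbig} (hf : f ∈ RsetAll) (hg : g ∈ RsetAll) (hh : h ∈ RsetAll) :
    mulR (mulR f g) h = mulR f (mulR g h) := by
  funext n
  rw [mulR_apply_eq_fullSupportPart (mulR_mem hf hg).1 hh.1,
    mulR_apply_eq_fullSupportPart hf.1 (mulR_mem hg hh).1, theta_mulR, theta_mulR, mul_assoc]

theorem sing_zero_one_mulR {f : Rbig} (hf : f ∈ RsetAll) : mulR (sing 0 1) f = f := by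
  funext n
  rw [mulR_apply_eq_fullSupportPart sing_zero_one_mem.1 hf.1, theta_sing_zero_one, one_mul,
    fullSupportPart_theta hf.1]

theorem mulR_add_left (f g h : Rbig) : mulR (f + g) h = mulR f h + mulR g h := by
  funext n
  simp only [mulR_apply, Pi.add_apply, coverMul_add_left, sum_add_distrib]

theorem mulR_add_right (f g h : Rbig) : mulR f (g + h) = mulR f g + mulR f h := by
  funext n
  simp only [mulR_apply, Pi.add_apply, coverMul_add_right, sum_add_distrib]

theorem mulR_smul_left (c : ℚ) (f g : Rbig) : mulR (c • f) g = c • mulR f g := by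
  funext n
  simp only [mulR_apply, Pi.smul_apply, coverMul_smul_left, smul_sum]

theorem mulR_smul_right (c : ℚ) (f g : Rbig) : mulR f (c • g) = c • mulR f g := by
  funext n
  simp only [mulR_apply, Pi.smul_apply, coverMul_smul_right, smul_sum]

theorem isHomogeneous_mulR {f g : Rbig} {r s : ℕ} (hf : ∀ n, (f n).IsHomogeneous r)
    (hg : ∀ n, (g n).IsHomogeneous s) (n : ℕ) : (mulR f g n).IsHomogeneous (r + s) :=
  IsHomogeneous.sum _ _ _ fun p _ => IsHomogeneous.sum _ _ _ fun q _ => (hf p).coverMul (hg q)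

theorem stmt_3 :
    (sing 0 1 ∈ RsetAll) ∧
    (∀ f ∈ RsetAll, ∀ g ∈ RsetAll, mulR f g ∈ RsetAll) ∧
    (∀ f ∈ RsetAll, ∀ g ∈ RsetAll, mulR f g = mulR g f) ∧
    (∀ f ∈ RsetAll, ∀ g ∈ RsetAll, ∀ h ∈ RsetAll,
      mulR (mulR f g) h = mulR f (mulR g h)) ∧
    (∀ f ∈ RsetAll, mulR (sing 0 1) f = f ∧ mulR f (sing 0 1) = f) ∧
    (∀ f ∈ RsetAll, ∀ g ∈ RsetAll, ∀ h ∈ RsetAll,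
      mulR (f + g) h = mulR f h + mulR g h ∧ mulR f (g + h) = mulR f g + mulR f h) ∧
    (∀ (c : ℚ) (f : Rbig), f ∈ RsetAll → ∀ g ∈ RsetAll,
      mulR (c • f) g = c • mulR f g ∧ mulR f (c • g) = c • mulR f g) ∧
    (∀ f ∈ RsetAll, ∀ g ∈ RsetAll, ∀ r s : ℕ,
      (∀ n, (f n).IsHomogeneous r) → (∀ n, (g n).IsHomogeneous s) →
      ∀ n, ((mulR f g) n).IsHomogeneous (r + s)) :=
  ⟨sing_zero_one_mem, fun _ hf _ hg => mulR_mem hf hg, fun f _ g _ => mulR_comm f g,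
    fun _ hf _ hg _ hh => mulR_assoc hf hg hh,
    fun f hf => ⟨sing_zero_one_mulR hf, (mulR_comm f _).trans (sing_zero_one_mulR hf)⟩,
    fun f _ g _ h _ => ⟨mulR_add_left f g h, mulR_add_right f g h⟩,
    fun c f _ g _ => ⟨mulR_smul_left c f g, mulR_smul_right c f g⟩,
    fun _ _ _ _ _ _ hf hg => isHomogeneous_mulR hf hg⟩

end
end

section
/- Let k be a commutative ring, M a finitely generated free ℤ/2-graded k-module with homogeneous bases (Δ_ν) and (Δ^ν) satisfying b(Δ_ν, Δ^{ν'}) = δ_{ν,ν'} for an even bilinear form b : M ⊗ M → k. Let m, n ≥ 1, 1 ≤ j ≤ m, and let v ∈ M^{⊗(m+1)}, w ∈ M^{⊗(n+1)} be even elements. Then for any α = α_0 ⊗ ⋯ ⊗ α_{m+n−1} ∈ M^{⊗(m+n)} with homogeneous α_i: ⟨v ∘_j w, α⟩ = Σ_ν (−1)^{|Δ_ν|} ⟨v, α_0 ⊗ ⋯ ⊗ α_{j−1} ⊗ Δ_ν ⊗ α_{j+n} ⊗ ⋯ ⊗ α_{m+n−1}⟩ · ⟨w, Δ^ν ⊗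 α_j ⊗ ⋯ ⊗ α_{j+n−1}⟩. -/
/-!
Both sides are bilinear in `(v, w)`, so it suffices to take `v`, `w` pure tensors of homogeneous
elements, each with an even number `K_v`, `K_w` of odd factors. Whenever the product of the
`b`-factors of a pairing `⟨x, a⟩` is nonzero, paired factors have equal degrees, so its Koszul
sign collapses to `(-1)^(K_x choose 2)`. Modulo signs, the `b`-factors of `⟨v ∘_j w, α⟩` and
those of the two pairings on the right differ only in the contracted factor `b(v_j, w_0)`, which
the dual bases rebuild as `Σ_ν b(v_j, Δ_ν) b(w_0, Δ^ν)`. The sign of `∘_j` is trivial since `w`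
is even, and the remaining signs agree because `K_{v ∘_j w} + 2|v_j| = K_v + K_w` with
`K_v`, `K_w` even.
-/

open scoped TensorProduct
open PiTensorProduct

open scoped Classical

noncomputable section

open Finset

section Splice

variable {X : Type*} {m n j : ℕ}

/-- The index pattern of `∘_j`: `g₀ … g_{j-1} h₁ … hₙ g_{j+1} … g_m`. -/
def spliceAt (n j : ℕ) (hj : j ≤ m) (g : Fin (m+1) → X) (h : Fin (n+1) → X) :
    Fin (m+n) → X := fun i =>
  if _h1 : (i : ℕ) < j then g ⟨i, by omega⟩
  else if _h2 : (i : ℕ) < j + n then h ⟨(i : ℕ) - j + 1, by omega⟩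
  else g ⟨(i : ℕ) - n + 1, by omega⟩

/-- `α₀ … α_{j-1} x α_{j+n} … α_{m+n-1}` -/
def outerPart (hj : j ≤ m) (α : Fin (m+n) → X) (x : X) : Fin (m+1) → X := fun i =>
  if _h1 : (i : ℕ) < j then α ⟨i, by omega⟩
  else if _h2 : (i : ℕ) = j then x
  else α ⟨(i : ℕ) + n - 1, by omega⟩

/-- `y α_j … α_{j+n-1}` -/
def innerPart (hj : j ≤ m) (α : Fin (m+n) → X) (y : X) : Fin (n+1) → X :=
  Fin.cases y fun i => α ⟨j + i, by omega⟩

theorem spliceAt_outerPart_innerPart (hj : j ≤ m) (α : Fin (m+n) → X) (x y : X) :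
    spliceAt n j hj (outerPart hj α x) (innerPart hj α y) = α := by
  funext i
  simp only [spliceAt, outerPart, innerPart]
  split_ifs <;> first
    | omega
    | rfl
    | (rw [Fin.cases_succ']; congr 1; ext; simp; omega)
    | (congr 1; ext; simp; omega)

theorem spliceAt_map₂ {Y Z : Type*} (hj : j ≤ m) (F : X → Y → Z) (g : Fin (m+1) → X)
    (g' : Fin (m+1) → Y) (h : Fin (n+1) → X) (h' : Fin (n+1) → Y) :
    spliceAt n j hj (fun i => F (g i) (g' i)) (fun i => F (h i) (h' i)) =
      fun i => F (spliceAt n j hj g h i) (spliceAt n j hj g' h' i) := by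
  funext i
  simp only [spliceAt]
  split_ifs <;> rfl

theorem spliceAt_comp {Y : Type*} (hj : j ≤ m) (F : X → Y) (g : Fin (m+1) → X)
    (h : Fin (n+1) → X) :
    spliceAt n j hj (fun i => F (g i)) (fun i => F (h i)) = fun i => F (spliceAt n j hj g h i) :=
  spliceAt_map₂ hj (fun x (_ : Unit) => F x) g (fun _ => ()) h (fun _ => ())

theorem forall_spliceAt {P : X → Prop} (hj : j ≤ m) {g : Fin (m+1) → X} {h : Fin (n+1) → X}
    (hg : ∀ i, P (g i)) (hh : ∀ i, P (h i)) (i : Fin (m+n)) : P (spliceAt n j hj g h i) := by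
  simp only [spliceAt]
  split_ifs <;> simp only [hg, hh]

theorem forall_outerPart {P : X → Prop} (hj : j ≤ m) {α : Fin (m+n) → X} {x : X}
    (hα : ∀ i, P (α i)) (hx : P x) (i : Fin (m+1)) : P (outerPart hj α x i) := by
  simp only [outerPart]
  split_ifs <;> simp only [hα, hx]

theorem forall_innerPart {P : X → Prop} (hj : j ≤ m) {α : Fin (m+n) → X} {y : X}
    (hα : ∀ i, P (α i)) (hy : P y) (i : Fin (n+1)) : P (innerPart hj α y i) := by
  cases i using Fin.cases with
  | zero => exact hy
  | succ i => exact hα _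

theorem outerPart_apply_self (hj : j ≤ m) (α : Fin (m+n) → X) (x : X) :
    outerPart hj α x ⟨j, by omega⟩ = x := by
  simp [outerPart]

theorem innerPart_apply_zero (hj : j ≤ m) (α : Fin (m+n) → X) (y : X) :
    innerPart hj α y 0 = y := rfl

@[to_additive]
theorem prod_range_splice_mul {R : Type*} [CommMonoid R] (hj : j ≤ m) (f g : ℕ → R) :
    (∏ i ∈ range (m+n),
        if i < j then f i else if i < j + n then g (i - j + 1) else f (i - n + 1)) *
      (f j * g 0) = (∏ i ∈ range (m+1), f i) * ∏ i ∈ range (n+1), g i := by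
  obtain ⟨d, rfl⟩ := Nat.exists_eq_add_of_le hj
  set s : ℕ → R := fun i =>
    if i < j then f i else if i < j + n then g (i - j + 1) else f (i - n + 1)
  have hlow : ∀ i ∈ range j, s i = f i := fun i hi => if_pos (mem_range.1 hi)
  have hmid : ∀ i ∈ range n, s (j + i) = g (i + 1) := fun i hi => by
    simp only [s]
    rw [if_neg (by omega), if_pos (by simpa using hi), Nat.add_sub_cancel_left]
  have hhigh : ∀ i ∈ range d, s (j + n + i) = f (j + 1 + i) := fun i _ => by
    simp only [s]
    rw [if_neg (by omega), if_neg (by omega), show j + n + i - n + 1 = j + 1 + i by omega]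
  rw [show j + d + n = j + n + d by omega, prod_range_add, prod_range_add, prod_congr rfl hlow,
    prod_congr rfl hmid, prod_congr rfl hhigh, show j + d + 1 = j + 1 + d by omega,
    prod_range_add, prod_range_succ, prod_range_succ']
  simp only [mul_assoc, mul_comm, mul_left_comm]

@[to_additive]
theorem prod_spliceAt_mul {R : Type*} [CommMonoid R] (hj : j ≤ m) (p : Fin (m+1) → R)
    (q : Fin (n+1) → R) :
    (∏ i, spliceAt n j hj p q i) * (p ⟨j, by omega⟩ * q 0) = (∏ i, p i) * ∏ i, q i := by
  set f : ℕ → R := fun i => if h : i < m + 1 then p ⟨i, h⟩ else 1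
  set g : ℕ → R := fun i => if h : i < n + 1 then q ⟨i, h⟩ else 1
  have hs : ∀ i : Fin (m+n), spliceAt n j hj p q i = if (i : ℕ) < j then f i
      else if (i : ℕ) < j + n then g (i - j + 1) else f (i - n + 1) := by
    intro i
    simp only [spliceAt, f, g]
    split_ifs <;> first | rfl | omega
  rw [prod_congr rfl fun i _ => hs i, Fin.prod_univ_eq_prod_range (fun i => if i < j then f i
      else if i < j + n then g (i - j + 1) else f (i - n + 1)),
    show p ⟨j, by omega⟩ = f j by simp [f, not_lt.2 hj],
    show q 0 = g 0 by simp [g], prod_range_splice_mul hj,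
    ← Fin.prod_univ_eq_prod_range, ← Fin.prod_univ_eq_prod_range]
  simp only [f, g, Fin.is_lt, dif_pos, Fin.eta]

theorem card_filter_spliceAt_add {Q : X → Prop} [DecidablePred Q] (hj : j ≤ m)
    (g : Fin (m+1) → X) (h : Fin (n+1) → X) :
    #{i | Q (spliceAt n j hj g h i)} +
      ((if Q (g ⟨j, by omega⟩) then 1 else 0) + (if Q (h 0) then 1 else 0)) =
      #{i | Q (g i)} + #{i | Q (h i)} := by
  have := sum_spliceAt_add hj (fun i => if Q (g i) then 1 else 0)
    (fun i => if Q (h i) then 1 else 0)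
  rw [spliceAt_comp hj fun x => if Q x then 1 else 0] at this
  simpa only [card_filter] using this

theorem prod_apply_spliceAt_mul {Y R : Type*} [CommMonoid R] (hj : j ≤ m) (F : X → Y → R)
    (g : Fin (m+1) → X) (h : Fin (n+1) → X) (α : Fin (m+n) → Y) (x y : Y) :
    (∏ i, F (spliceAt n j hj g h i) (α i)) * (F (g ⟨j, by omega⟩) x * F (h 0) y) =
      (∏ i, F (g i) (outerPart hj α x i)) * ∏ i, F (h i) (innerPart hj α y i) := by
  have := prod_spliceAt_mul hj (fun i => F (g i) (outerPart hj α x i))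
    (fun i => F (h i) (innerPart hj α y i))
  rwa [spliceAt_map₂, spliceAt_outerPart_innerPart, outerPart_apply_self,
    innerPart_apply_zero] at this

end Splice

section Sign

theorem choose_two_add_self_add (e : ℕ) : (e + e).choose 2 + e = 2 * (e * e) := by
  induction e with
  | zero => simp
  | succ e ih =>
    rw [show e + 1 + (e + 1) = e + e + 1 + 1 by ring, Nat.choose_succ_succ', Nat.choose_one_right,
      Nat.choose_succ_succ', Nat.choose_one_right]
    linarith

theorem card_filter_snd_lt_and {N : ℕ} (Q : Fin N → Prop) [DecidablePred Q] :
    #{p : Fin N × Fin N | (p.2 : ℕ) < p.1 ∧ Q p.1 ∧ Q p.2} = (#{i | Q i}).choose 2 := by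
  rw [← card_product_filter_lt]
  refine card_equiv (Equiv.prodComm _ _) ?_
  simp
  tauto

variable {R : Type*} [CommMonoid R] [HasDistribNeg R]

theorem neg_one_pow_choose_two_add_self (e : ℕ) :
    (-1 : R) ^ (e + e).choose 2 = (-1) ^ e := by
  have h := congrArg (fun x => (-1 : R) ^ x) (choose_two_add_self_add e)
  simp only [pow_add, pow_mul, neg_one_sq, one_pow] at h
  calc (-1 : R) ^ (e + e).choose 2 = (-1) ^ (e + e).choose 2 * ((-1) ^ e * (-1) ^ e) := by
        rw [← pow_add, ← two_mul, pow_mul, neg_one_sq, one_pow, mul_one]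
    _ = (-1) ^ e := by rw [← mul_assoc, h, one_mul]

theorem neg_one_pow_choose_two_of_add_two_mul {Ku Kv Kw δ : ℕ} (hv : Even Kv) (hw : Even Kw)
    (h : Ku + 2 * δ = Kv + Kw) :
    (-1 : R) ^ Ku.choose 2 = (-1) ^ (δ + Kv.choose 2 + Kw.choose 2) := by
  obtain ⟨a, rfl⟩ := hv
  obtain ⟨c, rfl⟩ := hw
  obtain rfl : Ku = (a + c - δ) + (a + c - δ) := by omega
  simp only [pow_add, neg_one_pow_choose_two_add_self]
  rw [← pow_add, ← pow_add, show δ + a + c = (a + c - δ) + 2 * δ by omega, pow_add, pow_mul,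
    neg_one_sq, one_pow, mul_one]

theorem prod_ite_neg_one {ι : Type*} [Fintype ι] (P : ι → Prop) [DecidablePred P] :
    ∏ i, (if P i then (-1 : R) else 1) = (-1) ^ #{i | P i} := by
  rw [prod_ite, prod_const, prod_const, one_pow, mul_one]

theorem prod_ite_and_neg_one_eq_one {α β : Type*} [Fintype α] [Fintype β] {P : α → Prop}
    (Q : β → Prop) [DecidablePred P] [DecidablePred Q] (hP : Even #{a | P a}) :
    ∏ p : α × β, (if P p.1 ∧ Q p.2 then (-1 : R) else 1) = 1 := by
  rw [prod_ite_neg_one, ← univ_product_univ, filter_product, card_product,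
    (hP.mul_right _).neg_one_pow]

theorem prod_sign_eq_one_of_even {M S : Type*} [SetLike S M] {M0 M1 : S} {m n : ℕ}
    {w : Fin (n+1) → M} (hw : Even #{i | w i ∈ M1 ∧ w i ∉ M0}) (j : ℕ) (v : Fin (m+1) → M) :
    (∏ p : Fin (n+1) × Fin (m+1),
      if j < (p.2 : ℕ) ∧ (w p.1 ∈ M1 ∧ w p.1 ∉ M0) ∧ (v p.2 ∈ M1 ∧ v p.2 ∉ M0)
      then (-1 : R) else 1) = 1 := by
  simpa only [and_left_comm] using
    prod_ite_and_neg_one_eq_one (R := R) (fun s : Fin (m+1) => j < s ∧ v s ∈ M1 ∧ v s ∉ M0) hw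

end Sign

theorem LinearMap.eqOn_span₂ {R P Q N : Type*} [CommSemiring R] [AddCommMonoid P]
    [AddCommMonoid Q] [AddCommMonoid N] [Module R P] [Module R Q] [Module R N]
    {F G : P →ₗ[R] Q →ₗ[R] N} {s : Set P} {t : Set Q}
    (h : ∀ x ∈ s, ∀ y ∈ t, F x y = G x y) {x : P} (hx : x ∈ Submodule.span R s) {y : Q}
    (hy : y ∈ Submodule.span R t) : F x y = G x y := by
  refine LinearMap.eqOn_span (f := F.flip y) (g := G.flip y) (fun x' hx' => ?_) hx
  exact LinearMap.eqOn_span (f := F x') (g := G x') (fun y' hy' => h x' hx' y' hy') hy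

section Graded

variable {k M : Type*} [CommRing k] [AddCommGroup M] [Module k M] {M0 M1 : Submodule k M}
  {b : M →ₗ[k] M →ₗ[k] k}

def superPairing (M0 M1 : Submodule k M) (b : M →ₗ[k] M →ₗ[k] k) {N : ℕ} (x a : Fin N → M) :
    k :=
  (∏ p : Fin N × Fin N,
    if (p.2 : ℕ) < (p.1 : ℕ) ∧ (x p.1 ∈ M1 ∧ x p.1 ∉ M0) ∧ (a p.2 ∈ M1 ∧ a p.2 ∉ M0)
    then (-1 : k) else 1) * ∏ i, b (x i) (a i)

theorem odd_iff_odd_of_apply_ne_zero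
    (hb : (∀ v ∈ M0, ∀ w ∈ M1, b v w = 0) ∧ (∀ v ∈ M1, ∀ w ∈ M0, b v w = 0)) {x y : M}
    (hx : x ∈ M0 ∨ x ∈ M1) (hy : y ∈ M0 ∨ y ∈ M1) (hxy : b x y ≠ 0) :
    (x ∈ M1 ∧ x ∉ M0) ↔ (y ∈ M1 ∧ y ∉ M0) := by
  have h01 := fun hx0 hy1 => hxy (hb.1 x hx0 y hy1)
  have h10 := fun hx1 hy0 => hxy (hb.2 x hx1 y hy0)
  tauto

theorem superPairing_eq_neg_one_pow_mul
    (hb : (∀ v ∈ M0, ∀ w ∈ M1, b v w = 0) ∧ (∀ v ∈ M1, ∀ w ∈ M0, b v w = 0)) {N : ℕ}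
    {x a : Fin N → M} (hx : ∀ i, x i ∈ M0 ∨ x i ∈ M1) (ha : ∀ i, a i ∈ M0 ∨ a i ∈ M1) :
    superPairing M0 M1 b x a =
      (-1) ^ (#{i | x i ∈ M1 ∧ x i ∉ M0}).choose 2 * ∏ i, b (x i) (a i) := by
  by_cases h0 : ∏ i, b (x i) (a i) = 0
  · simp [superPairing, h0]
  have hodd i : (a i ∈ M1 ∧ a i ∉ M0) ↔ (x i ∈ M1 ∧ x i ∉ M0) :=
    (odd_iff_odd_of_apply_ne_zero hb (hx i) (ha i) fun h =>
      h0 (prod_eq_zero (mem_univ i) h)).symm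
  simp only [superPairing, hodd, prod_ite_neg_one]
  rw [card_filter_snd_lt_and fun i => x i ∈ M1 ∧ x i ∉ M0]

theorem sum_apply_basis_mul_apply {ι : Type*} [Fintype ι] (Δ : Module.Basis ι k M) (Δ' : ι → M)
    (hdual : ∀ ν ν', b (Δ ν) (Δ' ν') = if ν = ν' then 1 else 0) (x y : M) :
    ∑ ν, b x (Δ ν) * b y (Δ' ν) = b x y := by
  have hrepr ν : b y (Δ' ν) = Δ.repr y ν := by
    have : b.flip (Δ' ν) = Δ.coord ν := Δ.ext fun μ => by simp [hdual, Finsupp.single_apply]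
    exact LinearMap.congr_fun this y
  conv_rhs => rw [← Δ.sum_repr y]
  simp only [hrepr, map_sum, map_smul, smul_eq_mul, mul_comm]

theorem sum_sign_mul_apply_basis_mul_apply
    (hb : (∀ v ∈ M0, ∀ w ∈ M1, b v w = 0) ∧ (∀ v ∈ M1, ∀ w ∈ M0, b v w = 0))
    {ι : Type*} [Fintype ι] (Δ : Module.Basis ι k M) (Δ' : ι → M)
    (hΔ : ∀ ν, Δ ν ∈ M0 ∨ Δ ν ∈ M1)
    (hdual : ∀ ν ν', b (Δ ν) (Δ' ν') = if ν = ν' then 1 else 0) {x : M}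
    (hx : x ∈ M0 ∨ x ∈ M1) (y : M) :
    ∑ ν, (if Δ ν ∈ M1 ∧ Δ ν ∉ M0 then (-1 : k) else 1) * (b x (Δ ν) * b y (Δ' ν)) =
      (if x ∈ M1 ∧ x ∉ M0 then (-1 : k) else 1) * b x y := by
  rw [← sum_apply_basis_mul_apply Δ Δ' hdual x y, mul_sum]
  refine sum_congr rfl fun ν _ => ?_
  by_cases h0 : b x (Δ ν) = 0
  · simp [h0]
  have := odd_iff_odd_of_apply_ne_zero hb hx (hΔ ν) h0
  split_ifs <;> first | rfl | tauto

theorem apply_mul_superPairing_spliceAt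
    (hb : (∀ v ∈ M0, ∀ w ∈ M1, b v w = 0) ∧ (∀ v ∈ M1, ∀ w ∈ M0, b v w = 0))
    {ι : Type*} [Fintype ι] (Δ : Module.Basis ι k M) (Δ' : ι → M)
    (hΔ : ∀ ν, Δ ν ∈ M0 ∨ Δ ν ∈ M1) (hΔ' : ∀ ν, Δ' ν ∈ M0 ∨ Δ' ν ∈ M1)
    (hdual : ∀ ν ν', b (Δ ν) (Δ' ν') = if ν = ν' then 1 else 0)
    {m n j : ℕ} (hj : j ≤ m) {v : Fin (m+1) → M} {w : Fin (n+1) → M}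
    (hv : ∀ i, v i ∈ M0 ∨ v i ∈ M1) (hv_even : Even #{i | v i ∈ M1 ∧ v i ∉ M0})
    (hw : ∀ i, w i ∈ M0 ∨ w i ∈ M1) (hw_even : Even #{i | w i ∈ M1 ∧ w i ∉ M0})
    {α : Fin (m+n) → M} (hα : ∀ i, α i ∈ M0 ∨ α i ∈ M1) :
    b (v ⟨j, by omega⟩) (w 0) * superPairing M0 M1 b (spliceAt n j hj v w) α =
      ∑ ν, (if Δ ν ∈ M1 ∧ Δ ν ∉ M0 then (-1 : k) else 1) *
        superPairing M0 M1 b v (outerPart hj α (Δ ν)) *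
        superPairing M0 M1 b w (innerPart hj α (Δ' ν)) := by
  have hcount := card_filter_spliceAt_add (Q := fun x => x ∈ M1 ∧ x ∉ M0) hj v w
  have hprod ν := prod_apply_spliceAt_mul hj (fun x y => b x y) v w α (Δ ν) (Δ' ν)
  have hterm ν : (if Δ ν ∈ M1 ∧ Δ ν ∉ M0 then (-1 : k) else 1) *
        superPairing M0 M1 b v (outerPart hj α (Δ ν)) *
        superPairing M0 M1 b w (innerPart hj α (Δ' ν)) =
      (-1) ^ ((#{i | v i ∈ M1 ∧ v i ∉ M0}).choose 2 + (#{i | w i ∈ M1 ∧ w i ∉ M0}).choose 2) *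
        (∏ i, b (spliceAt n j hj v w i) (α i)) *
        ((if Δ ν ∈ M1 ∧ Δ ν ∉ M0 then (-1 : k) else 1) *
          (b (v ⟨j, by omega⟩) (Δ ν) * b (w 0) (Δ' ν))) := by
    rw [superPairing_eq_neg_one_pow_mul hb hv
        (forall_outerPart (P := fun x => x ∈ M0 ∨ x ∈ M1) hj hα (hΔ ν)),
      superPairing_eq_neg_one_pow_mul hb hw
        (forall_innerPart (P := fun x => x ∈ M0 ∨ x ∈ M1) hj hα (hΔ' ν)),
      mul_assoc, mul_mul_mul_comm, ← hprod ν, pow_add]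
    ring
  rw [sum_congr rfl fun ν _ => hterm ν, ← mul_sum,
    sum_sign_mul_apply_basis_mul_apply hb Δ Δ' hΔ hdual (hv _), superPairing_eq_neg_one_pow_mul
      hb (forall_spliceAt (P := fun x => x ∈ M0 ∨ x ∈ M1) hj hv hw) hα]
  by_cases h0 : b (v ⟨j, by omega⟩) (w 0) = 0
  · simp [h0]
  have hδ := odd_iff_odd_of_apply_ne_zero hb (hv _) (hw 0) h0
  simp only [← hδ] at hcount
  rw [neg_one_pow_choose_two_of_add_two_mul hv_even hw_even
    (δ := if v ⟨j, by omega⟩ ∈ M1 ∧ v ⟨j, by omega⟩ ∉ M0 then 1 else 0) (by omega)]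
  split_ifs <;> ring

end Graded

/-- The composition of the cyclic operad `E^s[M,b]` pairs against pure
tensors by contracting with a pair of dual homogeneous bases.

The ℤ/2-grading of `M` is given by an internal direct sum decomposition `M = M₀ ⊕ M₁`;
an element is homogeneous iff it lies in `M₀` or in `M₁`, and has degree `1` iff it lies in
`M₁` and not in `M₀`.  The pairing `⟨,⟩` on `M^{⊗n}` and the operadic composition `∘_j` are
characterized by their (super-sign) formulas on pure tensors of homogeneous elements. -/
theorem stmt_19
    (k : Type*) [CommRing k]
    (M : Type*) [AddCommGroup M] [Module k M]
    (M0 M1 : Submodule k M)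
    (b : M →ₗ[k] M →ₗ[k] k)
    (hb_even : (∀ v ∈ M0, ∀ w ∈ M1, b v w = 0) ∧ (∀ v ∈ M1, ∀ w ∈ M0, b v w = 0))
    (ι : Type*) [Fintype ι]
    (Δ Δ' : Module.Basis ι k M)
    (hΔ : ∀ ν, Δ ν ∈ M0 ∨ Δ ν ∈ M1) (hΔ' : ∀ ν, Δ' ν ∈ M0 ∨ Δ' ν ∈ M1)
    (hdual : ∀ ν ν', b (Δ ν) (Δ' ν') = if ν = ν' then 1 else 0)
    -- the pairing `⟨,⟩` on the tensor powers of `M`, characterized on pure homogeneous tensors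
    (pair : ∀ n : ℕ, (⨂[k] (_ : Fin n), M) →ₗ[k] (⨂[k] (_ : Fin n), M) →ₗ[k] k)
    (hpair : ∀ (n : ℕ) (v a : Fin n → M),
      (∀ i, v i ∈ M0 ∨ v i ∈ M1) → (∀ i, a i ∈ M0 ∨ a i ∈ M1) →
      pair n (tprod k v) (tprod k a) =
        (∏ p : Fin n × Fin n,
          if (p.2 : ℕ) < (p.1 : ℕ) ∧
              (v p.1 ∈ M1 ∧ v p.1 ∉ M0) ∧ (a p.2 ∈ M1 ∧ a p.2 ∉ M0)
          then (-1 : k) else 1) *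
        ∏ i, b (v i) (a i))
    -- the operadic compositions `∘_j`, characterized on pure homogeneous tensors
    (comp : ∀ m n _j : ℕ,
      (⨂[k] (_ : Fin (m+1)), M) →ₗ[k] (⨂[k] (_ : Fin (n+1)), M) →ₗ[k]
        (⨂[k] (_ : Fin (m+n)), M))
    (hcomp : ∀ (m n j : ℕ) (_hm : 1 ≤ m) (_hn : 1 ≤ n) (_hj1 : 1 ≤ j) (_hjm : j ≤ m),
      ∀ (v : Fin (m+1) → M) (w : Fin (n+1) → M),
      (∀ i, v i ∈ M0 ∨ v i ∈ M1) → (∀ i, w i ∈ M0 ∨ w i ∈ M1) →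
      comp m n j (tprod k v) (tprod k w) =
        ((∏ p : Fin (n+1) × Fin (m+1),
            if j < (p.2 : ℕ) ∧
                (w p.1 ∈ M1 ∧ w p.1 ∉ M0) ∧ (v p.2 ∈ M1 ∧ v p.2 ∉ M0)
            then (-1 : k) else 1) *
          b (v ⟨j, by omega⟩) (w 0)) •
        tprod k (fun i : Fin (m+n) =>
          if _h1 : (i : ℕ) < j then v ⟨i, by have := i.isLt; omega⟩
          else if _h2 : (i : ℕ) < j + n then w ⟨(i : ℕ) - j + 1, by have := i.isLt; omega⟩
          else v ⟨(i : ℕ) - n + 1, by have := i.isLt; omega⟩))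
    -- the data of the statement
    (m n j : ℕ) (hm : 1 ≤ m) (hn : 1 ≤ n) (hj1 : 1 ≤ j) (hjm : j ≤ m)
    (v : ⨂[k] (_ : Fin (m+1)), M) (w : ⨂[k] (_ : Fin (n+1)), M)
    -- `v` and `w` are even
    (hv : v ∈ Submodule.span k {t | ∃ vv : Fin (m+1) → M,
      (∀ i, vv i ∈ M0 ∨ vv i ∈ M1) ∧
      Even (Finset.univ.filter (fun i => vv i ∈ M1 ∧ vv i ∉ M0)).card ∧
      t = tprod k vv})
    (hw : w ∈ Submodule.span k {t | ∃ ww : Fin (n+1) → M,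
      (∀ i, ww i ∈ M0 ∨ ww i ∈ M1) ∧
      Even (Finset.univ.filter (fun i => ww i ∈ M1 ∧ ww i ∉ M0)).card ∧
      t = tprod k ww})
    (α : Fin (m+n) → M) (hα : ∀ i, α i ∈ M0 ∨ α i ∈ M1) :
    pair (m+n) (comp m n j v w) (tprod k α) =
      ∑ ν : ι,
        (if Δ ν ∈ M1 ∧ Δ ν ∉ M0 then (-1 : k) else 1) *
        (pair (m+1) v (tprod k (fun i : Fin (m+1) =>
            if _h1 : (i : ℕ) < j then α ⟨i, by have := i.isLt; omega⟩
            else if _h2 : (i : ℕ) = j then Δ ν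
            else α ⟨(i : ℕ) + n - 1, by have := i.isLt; omega⟩))) *
        (pair (n+1) w (tprod k
          ((Fin.cases (Δ' ν)
            (fun i : Fin n => α ⟨j + (i : ℕ), by have := i.isLt; omega⟩)) :
              Fin (n+1) → M))) := by
  have key := LinearMap.eqOn_span₂ (F := (comp m n j).compr₂ ((pair (m+n)).flip (tprod k α)))
    (G := ∑ ν, (LinearMap.mul k k).compl₁₂
      ((if Δ ν ∈ M1 ∧ Δ ν ∉ M0 then (-1 : k) else 1) •
        (pair (m+1)).flip (tprod k (outerPart hjm α (Δ ν))))
      ((pair (n+1)).flip (tprod k (innerPart hjm α (Δ' ν))))) ?_ hv hw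
  · simp only [LinearMap.compr₂_apply, LinearMap.flip_apply, LinearMap.sum_apply,
      LinearMap.compl₁₂_apply, LinearMap.mul_apply', LinearMap.smul_apply, smul_eq_mul] at key
    exact key
  rintro _ ⟨v, hv, hv_even, rfl⟩ _ ⟨w, hw, hw_even, rfl⟩
  simp only [LinearMap.compr₂_apply, LinearMap.flip_apply, LinearMap.sum_apply,
      LinearMap.compl₁₂_apply, LinearMap.mul_apply', LinearMap.smul_apply, smul_eq_mul]
  rw [hcomp m n j hm hn hj1 hjm v w hv hw, map_smul, LinearMap.smul_apply, smul_eq_mul,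
    prod_sign_eq_one_of_even hw_even, one_mul, hpair _ _ α ?_ hα]
  · refine (apply_mul_superPairing_spliceAt hb_even Δ Δ' hΔ hΔ' hdual hjm hv hv_even hw hw_even
      hα).trans (sum_congr rfl fun ν _ => ?_)
    rw [hpair _ v _ hv ?_, hpair _ w _ hw ?_]
    · rfl
    · exact forall_innerPart (P := fun x => x ∈ M0 ∨ x ∈ M1) hjm hα (hΔ' ν)
    · exact forall_outerPart (P := fun x => x ∈ M0 ∨ x ∈ M1) hjm hα (hΔ ν)
  · exact forall_spliceAt (P := fun x => x ∈ M0 ∨ x ∈ M1) hjm hv hw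

end
end
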